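/- For every real A > 1 there exists a constant C_A such that for every prime power q, every d ∈ ℳ of degree m ≥ 1, every real σ with σ ≥ 2/3 and every z ∈ ℂ with |z| ≤ A, Σ_{a≥0} |B^d_z(a)|·q^{−σa} ≤ C_A·∏_{p∈ℐ, p∣d} (1 − q^{−σ·deg p})^{−A}. -/

import Mathlib

/-!
Put `x = q^{-σ} ≤ 2^{-2/3}`. Partial sums of `∑ |B^d_z(a)| x^a` are bounded by the truncated
Euler product `∏_p ∑_k |b^d_z(p^k)| x^{k deg p}`. For `p ∣ d` the local factor is dominated by
the binomial series `∑_k multichoose(A, k) t^k = (1 - t)^{-A}` at `t = x^{deg p}`. For `p ∤ d` the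
coefficient of `S` in `(1 + zS)(1 - S)^z` vanishes, so the local factor is `1 + O_A(t²)`, at most
`exp(E_A t²)`; and `∑_p x^{2 deg p} ≤ ∑_n (q x²)^n` is uniformly bounded because
`q x² ≤ q^{1 - 2σ} ≤ 2^{-1/3}`.
-/

open Polynomial UniqueFactorizationMonoid
open scoped Classical

noncomputable section

/-- `cbinom w n = (1/n!)·∏_{j=0}^{n-1} (w - j)`, the generalized binomial coefficient. -/
def cbinom (w : ℂ) (n : ℕ) : ℂ :=
  (∏ j ∈ Finset.range n, (w - (j : ℂ))) / (Nat.factorial n : ℂ)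

/-- `bcoef z k`: the coefficient of `S^k` in `(1 + zS)·(1-S)^z`, using that the coefficient
of `S^k` in `(1-S)^z` is `(-1)^k·cbinom z k`. -/
def bcoef (z : ℂ) : ℕ → ℂ
  | 0 => 1
  | (k + 1) => z * ((-1 : ℂ) ^ k * cbinom z k) + (-1 : ℂ) ^ (k + 1) * cbinom z (k + 1)

/-- `b_z`, the multiplicative function on monic polynomials whose values on powers of a monic
irreducible `p` are the power series coefficients of `(1 + zS)·(1-S)^z`. -/
def bzf {F : Type} [Field F] (z : ℂ) (f : Polynomial F) : ℂ :=
  ∏ p ∈ (normalizedFactors f).toFinset,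
    bcoef z (Multiset.count p (normalizedFactors f))

/-- `B_z(n) = Σ_{f monic, deg f = n} b_z(f)`. -/
def Bz (F : Type) [Field F] (z : ℂ) (n : ℕ) : ℂ :=
  ∑ᶠ f ∈ {f : Polynomial F | f.Monic ∧ f.natDegree = n}, bzf z f

/-- The values of `b^d_z` on `p^k`: the coefficient of `S^k` in `(1-S)^z` if `p ∣ d`
(namely `(-1)^k·cbinom z k`), and the coefficient of `S^k` in `(1 + zS)·(1-S)^z` otherwise. -/
def bdcoef {F : Type} [Field F] (d : Polynomial F) (z : ℂ) (p : Polynomial F) (k : ℕ) : ℂ :=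
  if p ∣ d then (-1 : ℂ) ^ k * cbinom z k else bcoef z k

/-- `b^d_z`, the multiplicative function on monic polynomials determined by `bdcoef`. -/
def bdzf {F : Type} [Field F] (d : Polynomial F) (z : ℂ) (f : Polynomial F) : ℂ :=
  ∏ p ∈ (normalizedFactors f).toFinset,
    bdcoef d z p (Multiset.count p (normalizedFactors f))

/-- `B^d_z(n) = Σ_{f monic, deg f = n} b^d_z(f)`. -/
def Bdz (F : Type) [Field F] (d : Polynomial F) (z : ℂ) (n : ℕ) : ℂ :=
  ∑ᶠ f ∈ {f : Polynomial F | f.Monic ∧ f.natDegree = n}, bdzf d z f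


open Finset
open scoped Nat

namespace Real

theorem multichoose_eq_prod_div (A : ℝ) (k : ℕ) :
    Ring.multichoose A k = (∏ j ∈ range k, (A + j)) / k ! := by
  have hprod : (ascPochhammer ℝ k).eval A = ∏ j ∈ range k, (A + j) := by
    induction k with
    | zero => simp
    | succ k ih => rw [ascPochhammer_succ_eval, ih, prod_range_succ]
  have h := Ring.factorial_nsmul_multichoose_eq_ascPochhammer A k
  rw [ascPochhammer_smeval_eq_eval, nsmul_eq_mul] at h
  rw [← hprod, ← h, mul_div_cancel_left₀ _ (by positivity)]

theorem multichoose_nonneg {A : ℝ} (hA : 0 ≤ A) (k : ℕ) : 0 ≤ Ring.multichoose A k := by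
  rw [multichoose_eq_prod_div]
  exact div_nonneg (prod_nonneg fun j _ => by positivity) (by positivity)

theorem multichoose_succ (A : ℝ) (k : ℕ) :
    Ring.multichoose A (k + 1) = Ring.multichoose A k * ((A + k) / (k + 1)) := by
  rw [multichoose_eq_prod_div, multichoose_eq_prod_div, prod_range_succ, Nat.factorial_succ]
  push_cast
  field_simp

theorem multichoose_le_multichoose_succ {A : ℝ} (hA : 1 ≤ A) (k : ℕ) :
    Ring.multichoose A k ≤ Ring.multichoose A (k + 1) := by
  rw [multichoose_succ]
  refine le_mul_of_one_le_right (multichoose_nonneg (by linarith) k) ?_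
  rw [one_le_div (by positivity)]
  linarith

theorem hasSum_multichoose_mul_pow (A : ℝ) {t : ℝ} (ht : |t| < 1) :
    HasSum (fun k => Ring.multichoose A k * t ^ k) ((1 - t) ^ (-A)) := by
  have h := (one_div_one_sub_rpow_hasFPowerSeriesOnBall_zero A).hasSum
    (y := t) (by simpa [← ofReal_norm] using ht)
  rw [rpow_neg (by linarith [le_abs_self t])]
  simpa [FormalMultilinearSeries.ofScalars_apply_eq, Ring.multichoose_eq, mul_comm] using h

theorem sum_range_multichoose_mul_pow_le {A t : ℝ} (hA : 0 ≤ A) (ht0 : 0 ≤ t) (ht1 : t < 1)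
    (N : ℕ) : ∑ k ∈ range N, Ring.multichoose A k * t ^ k ≤ (1 - t) ^ (-A) :=
  sum_le_hasSum _ (fun k _ => mul_nonneg (multichoose_nonneg hA k) (pow_nonneg ht0 k))
    (hasSum_multichoose_mul_pow A (abs_lt.mpr ⟨by linarith, ht1⟩))

end Real

theorem norm_cbinom_le_multichoose {A : ℝ} {z : ℂ} (hz : ‖z‖ ≤ A) (k : ℕ) :
    ‖cbinom z k‖ ≤ Ring.multichoose A k := by
  rw [cbinom, Real.multichoose_eq_prod_div, norm_div, norm_prod, Complex.norm_natCast]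
  gcongr with j
  calc ‖z - j‖ ≤ ‖z‖ + ‖(j : ℂ)‖ := norm_sub_le _ _
    _ ≤ A + j := by rw [Complex.norm_natCast]; linarith

theorem bcoef_one (z : ℂ) : bcoef z 1 = 0 := by
  simp [bcoef, cbinom]

theorem norm_bcoef_add_two_le {A : ℝ} {z : ℂ} (hA : 1 ≤ A) (hz : ‖z‖ ≤ A) (j : ℕ) :
    ‖bcoef z (j + 2)‖ ≤ (A + 1) * Ring.multichoose A (j + 2) := by
  have hmono := Real.multichoose_le_multichoose_succ hA (j + 1)
  have h1 := norm_cbinom_le_multichoose hz (j + 1)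
  calc ‖bcoef z (j + 2)‖ ≤ ‖z‖ * ‖cbinom z (j + 1)‖ + ‖cbinom z (j + 2)‖ := by
        simpa [bcoef] using norm_add_le (z * ((-1) ^ (j + 1) * cbinom z (j + 1)))
          ((-1) ^ (j + 2) * cbinom z (j + 2))
    _ ≤ A * Ring.multichoose A (j + 1) + Ring.multichoose A (j + 2) := by
        gcongr
        exact norm_cbinom_le_multichoose hz _
    _ ≤ (A + 1) * Ring.multichoose A (j + 2) := by nlinarith

theorem sum_range_norm_cbinom_mul_pow_le {A t : ℝ} {z : ℂ} (hz : ‖z‖ ≤ A) (ht0 : 0 ≤ t)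
    (ht1 : t < 1) (N : ℕ) : ∑ k ∈ range N, ‖cbinom z k‖ * t ^ k ≤ (1 - t) ^ (-A) :=
  (sum_le_sum fun k _ => by gcongr; exact norm_cbinom_le_multichoose hz k).trans
    (Real.sum_range_multichoose_mul_pow_le ((norm_nonneg z).trans hz) ht0 ht1 N)

/-- Since `bcoef z 1 = 0`, the local factor away from `d` is `1 + O(t²)`; the constant comes from
comparing with the binomial series at a fixed point `s ≥ t`. -/
theorem sum_range_norm_bcoef_mul_pow_le {A s t : ℝ} {z : ℂ} (hA : 1 ≤ A) (hz : ‖z‖ ≤ A)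
    (hs0 : 0 < s) (hs1 : s < 1) (ht0 : 0 ≤ t) (hts : t ≤ s) (N : ℕ) :
    ∑ k ∈ range N, ‖bcoef z k‖ * t ^ k ≤
      Real.exp ((A + 1) * (1 - s) ^ (-A) / s ^ 2 * t ^ 2) := by
  set c := (A + 1) * (t / s) ^ 2
  have hc : 0 ≤ c := by positivity
  have hterm : ∀ k, ‖bcoef z k‖ * t ^ k ≤
      (if k = 0 then 1 else 0) + c * (Ring.multichoose A k * s ^ k) := by
    have hm := Real.multichoose_nonneg (by linarith : 0 ≤ A)
    rintro (_ | _ | j)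
    · simp [bcoef]; positivity
    · simp [bcoef_one]; positivity
    · have hpow : t ^ (j + 2) ≤ (t / s) ^ 2 * s ^ (j + 2) := by
        have : (t / s) ^ 2 * s ^ (j + 2) = s ^ j * t ^ 2 := by field_simp; ring
        rw [this, pow_add]
        gcongr
      calc ‖bcoef z (j + 2)‖ * t ^ (j + 2)
          ≤ ((A + 1) * Ring.multichoose A (j + 2)) * ((t / s) ^ 2 * s ^ (j + 2)) := by
            gcongr
            · exact mul_nonneg (by linarith) (hm _)
            · exact norm_bcoef_add_two_le hA hz j
        _ = 0 + c * (Ring.multichoose A (j + 2) * s ^ (j + 2)) := by ring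
  have hone : ∑ k ∈ range N, (if k = 0 then (1 : ℝ) else 0) ≤ 1 := by
    rw [sum_ite_eq']; split_ifs <;> norm_num
  calc ∑ k ∈ range N, ‖bcoef z k‖ * t ^ k
      ≤ ∑ k ∈ range N, ((if k = 0 then 1 else 0) + c * (Ring.multichoose A k * s ^ k)) :=
        sum_le_sum fun k _ => hterm k
    _ ≤ 1 + c * (1 - s) ^ (-A) := by
        rw [sum_add_distrib, ← mul_sum]
        exact add_le_add hone (mul_le_mul_of_nonneg_left
          (Real.sum_range_multichoose_mul_pow_le (by linarith) hs0.le hs1 N) hc)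
    _ = 1 + (A + 1) * (1 - s) ^ (-A) / s ^ 2 * t ^ 2 := by ring
    _ ≤ _ := Real.add_one_le_exp _ |>.trans_eq' (add_comm _ _)

/-- Expanding the right-hand side gives one term for each exponent vector in `[0, M]^P`; the
exponent vectors `e f` of the elements of `U` are distinct, and all terms are nonnegative. -/
theorem Finset.sum_prod_le_prod_sum_range {α β : Type*} (U : Finset α) (P : Finset β)
    (e : α → β → ℕ) (w : β → ℕ → ℝ) (hw : ∀ p k, 0 ≤ w p k) {M : ℕ}
    (he : ∀ f ∈ U, ∀ p ∈ P, e f p ≤ M) (hinj : Set.InjOn (fun f (p : P) => e f p) U) :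
    ∑ f ∈ U, ∏ p ∈ P, w p (e f p) ≤ ∏ p ∈ P, ∑ k ∈ range (M + 1), w p k := by
  set E := fun f (p : P) => e f p
  calc ∑ f ∈ U, ∏ p ∈ P, w p (e f p) = ∑ g ∈ U.image E, ∏ p : P, w p (g p) := by
        rw [sum_image hinj]
        exact sum_congr rfl fun f _ => (prod_coe_sort P _).symm
    _ ≤ ∑ g ∈ Fintype.piFinset fun _ : P => range (M + 1), ∏ p : P, w p (g p) := by
        refine sum_le_sum_of_subset_of_nonneg ?_ fun g _ _ => prod_nonneg fun p _ => hw _ _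
        intro g hg
        obtain ⟨f, hf, rfl⟩ := mem_image.mp hg
        simpa [Nat.lt_succ_iff, E] using fun p hp => he f hf p hp
    _ = ∏ p ∈ P, ∑ k ∈ range (M + 1), w p k := by
        rw [← prod_univ_sum, prod_coe_sort P fun p => ∑ k ∈ range (M + 1), w p k]

namespace Polynomial

theorem injOn_coeff_setOf_monic_natDegree_eq {R : Type*} [Semiring R] (n : ℕ) :
    Set.InjOn (fun (f : R[X]) (i : Fin n) => f.coeff i) {f | f.Monic ∧ f.natDegree = n} := by
  rintro f ⟨hfm, hfn⟩ g ⟨hgm, hgn⟩ h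
  ext i
  rcases lt_trichotomy i n with hi | hi | hi
  · exact congrFun h ⟨i, hi⟩
  · rw [hi, ← hfn, hfm.coeff_natDegree, hfn, ← hgn, hgm.coeff_natDegree]
  · rw [coeff_eq_zero_of_natDegree_lt (hfn ▸ hi), coeff_eq_zero_of_natDegree_lt (hgn ▸ hi)]

variable {F : Type} [Field F]

theorem prod_normalizedFactors_of_monic {f : F[X]} (hf : f.Monic) :
    (normalizedFactors f).prod = f := by
  rw [prod_normalizedFactors_eq hf.ne_zero, hf.normalize_eq_self]

theorem natDegree_eq_sum_count_mul_natDegree {f : F[X]} (hf : f.Monic) {P : Finset F[X]}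
    (hP : (normalizedFactors f).toFinset ⊆ P) :
    f.natDegree = ∑ p ∈ P, (normalizedFactors f).count p * p.natDegree := by
  conv_lhs => rw [← prod_normalizedFactors_of_monic hf]
  rw [natDegree_multiset_prod_of_monic _ fun p hp =>
    ((Polynomial.mem_normalizedFactors_iff hf.ne_zero).mp hp).2.1, sum_multiset_map_count]
  refine sum_subset hP fun p _ hp => ?_
  rw [Multiset.count_eq_zero.mpr (mt Multiset.mem_toFinset.mpr hp), zero_smul]

theorem count_normalizedFactors_le_natDegree {f : F[X]} (hf : f.Monic) (p : F[X]) :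
    (normalizedFactors f).count p ≤ f.natDegree := by
  by_cases hp : p ∈ normalizedFactors f
  · have hdeg := ((Polynomial.mem_normalizedFactors_iff hf.ne_zero).mp hp).1.natDegree_pos
    rw [natDegree_eq_sum_count_mul_natDegree hf subset_rfl]
    exact (Nat.le_mul_of_pos_right _ hdeg).trans
      (single_le_sum (f := fun q => (normalizedFactors f).count q * q.natDegree)
        (fun q _ => Nat.zero_le _) (Multiset.mem_toFinset.mpr hp))
  · simp [Multiset.count_eq_zero.mpr hp]

section FiniteField

variable (F) [Fintype F]

theorem finite_setOf_monic_natDegree_eq (n : ℕ) :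
    {f : F[X] | f.Monic ∧ f.natDegree = n}.Finite :=
  Set.Finite.of_finite_image (Set.toFinite _) (injOn_coeff_setOf_monic_natDegree_eq n)

def monicsOfDegree (n : ℕ) : Finset F[X] := (finite_setOf_monic_natDegree_eq F n).toFinset

variable {F}

@[simp]
theorem mem_monicsOfDegree {n : ℕ} {f : F[X]} :
    f ∈ monicsOfDegree F n ↔ f.Monic ∧ f.natDegree = n := by
  simp [monicsOfDegree]

theorem card_monicsOfDegree_le (n : ℕ) : #(monicsOfDegree F n) ≤ Fintype.card F ^ n := by
  simpa using card_le_card_of_injOn (t := (univ : Finset (Fin n → F))) _ (fun f _ => mem_univ _)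
    ((injOn_coeff_setOf_monic_natDegree_eq n).mono fun f hf => mem_monicsOfDegree.mp hf)

/-- There are at most `q ^ n` monic polynomials of degree `n`, so the sum is dominated by the
geometric series `∑ (q y) ^ n`. -/
theorem sum_pow_natDegree_le {P : Finset F[X]} (hP : ∀ p ∈ P, p.Monic) {y r : ℝ} (hy : 0 ≤ y)
    (hqy : Fintype.card F * y ≤ r) (hr : r < 1) :
    ∑ p ∈ P, y ^ p.natDegree ≤ (1 - r)⁻¹ := by
  have hr0 : 0 ≤ r := (mul_nonneg (Nat.cast_nonneg _) hy).trans hqy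
  have hfiber : ∀ n, ∑ p ∈ P with p.natDegree = n, y ^ p.natDegree ≤ r ^ n := fun n => by
    have hsub : {p ∈ P | p.natDegree = n} ⊆ monicsOfDegree F n := fun p hp => by
      simp only [mem_filter] at hp
      exact mem_monicsOfDegree.mpr ⟨hP p hp.1, hp.2⟩
    have hcard : (#{p ∈ P | p.natDegree = n} : ℝ) ≤ (Fintype.card F : ℝ) ^ n := by
      exact_mod_cast (card_le_card hsub).trans (card_monicsOfDegree_le n)
    calc ∑ p ∈ P with p.natDegree = n, y ^ p.natDegree
        = #{p ∈ P | p.natDegree = n} * y ^ n := by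
          rw [sum_congr rfl fun p hp => by rw [(mem_filter.mp hp).2], sum_const, nsmul_eq_mul]
      _ ≤ (Fintype.card F : ℝ) ^ n * y ^ n := by gcongr
      _ ≤ r ^ n := by rw [← mul_pow]; gcongr
  calc ∑ p ∈ P, y ^ p.natDegree
      = ∑ n ∈ P.image natDegree, ∑ p ∈ P with p.natDegree = n, y ^ p.natDegree :=
        (sum_fiberwise_of_maps_to (fun p hp => mem_image_of_mem _ hp) _).symm
    _ ≤ ∑ n ∈ P.image natDegree, r ^ n := sum_le_sum fun n _ => hfiber n
    _ ≤ (1 - r)⁻¹ :=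
        sum_le_hasSum _ (fun n _ => pow_nonneg hr0 n) (hasSum_geometric_of_lt_one hr0 hr)

end FiniteField

end Polynomial

section Bdz

variable {F : Type} [Field F]

theorem bdcoef_zero (d p : F[X]) (z : ℂ) : bdcoef d z p 0 = 1 := by
  by_cases h : p ∣ d <;> simp [bdcoef, h, bcoef, cbinom]

theorem norm_bdcoef_of_dvd {d p : F[X]} (h : p ∣ d) (z : ℂ) (k : ℕ) :
    ‖bdcoef d z p k‖ = ‖cbinom z k‖ := by
  simp [bdcoef, h]

theorem bdcoef_of_not_dvd {d p : F[X]} (h : ¬ p ∣ d) (z : ℂ) : bdcoef d z p = bcoef z := by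
  ext k
  simp [bdcoef, h]

theorem norm_bdzf_mul_pow_eq_prod (d : F[X]) (z : ℂ) (x : ℝ) {f : F[X]} (hf : f.Monic)
    {P : Finset F[X]} (hP : (normalizedFactors f).toFinset ⊆ P) :
    ‖bdzf d z f‖ * x ^ f.natDegree =
      ∏ p ∈ P, ‖bdcoef d z p ((normalizedFactors f).count p)‖ *
        (x ^ p.natDegree) ^ (normalizedFactors f).count p := by
  rw [prod_mul_distrib, bdzf, norm_prod, natDegree_eq_sum_count_mul_natDegree hf hP,
    ← prod_pow_eq_pow_sum]
  congr 1
  · refine prod_subset hP fun p _ hp => ?_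
    rw [Multiset.count_eq_zero.mpr (mt Multiset.mem_toFinset.mpr hp), bdcoef_zero, norm_one]
  · exact prod_congr rfl fun p _ => by rw [← pow_mul, mul_comm]

theorem prod_filter_dvd_sum_norm_bdcoef_le {A x : ℝ} {z : ℂ} {d : F[X]} (hd : d ≠ 0)
    (hz : ‖z‖ ≤ A) (hx0 : 0 ≤ x) (hx1 : x < 1) (P : Finset F[X])
    (hP : ∀ p ∈ P, p.Monic ∧ Irreducible p) (M : ℕ) :
    ∏ p ∈ P with p ∣ d, ∑ k ∈ range M, ‖bdcoef d z p k‖ * (x ^ p.natDegree) ^ k ≤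
      ∏ p ∈ (normalizedFactors d).toFinset, (1 - x ^ p.natDegree) ^ (-A) := by
  have hA : 0 ≤ A := (norm_nonneg z).trans hz
  have hpow : ∀ p : F[X], Irreducible p → x ^ p.natDegree < 1 := fun p hp =>
    pow_lt_one₀ hx0 hx1 hp.natDegree_pos.ne'
  calc ∏ p ∈ P with p ∣ d, ∑ k ∈ range M, ‖bdcoef d z p k‖ * (x ^ p.natDegree) ^ k
      ≤ ∏ p ∈ P with p ∣ d, (1 - x ^ p.natDegree) ^ (-A) := by
        refine prod_le_prod (fun p _ => by positivity) fun p hp => ?_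
        obtain ⟨hpP, hpd⟩ := mem_filter.mp hp
        simp_rw [norm_bdcoef_of_dvd hpd]
        exact sum_range_norm_cbinom_mul_pow_le hz (by positivity) (hpow p (hP p hpP).2) M
    _ ≤ ∏ p ∈ (normalizedFactors d).toFinset, (1 - x ^ p.natDegree) ^ (-A) := by
        refine prod_le_prod_of_subset_of_one_le (fun p hp => ?_) (fun p hp => ?_) fun p hp _ => ?_
        · obtain ⟨hpP, hpd⟩ := mem_filter.mp hp
          exact Multiset.mem_toFinset.mpr
            ((Polynomial.mem_normalizedFactors_iff hd).mpr ⟨(hP p hpP).2, (hP p hpP).1, hpd⟩)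
        · exact Real.rpow_nonneg (by linarith [hpow p (hP p (mem_filter.mp hp).1).2]) _
        · have hirr := ((Polynomial.mem_normalizedFactors_iff hd).mp
            (Multiset.mem_toFinset.mp hp)).1
          exact Real.one_le_rpow_of_pos_of_le_one_of_nonpos (by linarith [hpow p hirr])
            (by linarith [pow_nonneg hx0 p.natDegree]) (by linarith)

variable [Fintype F]

theorem Bdz_eq_sum_monicsOfDegree (d : F[X]) (z : ℂ) (n : ℕ) :
    Bdz F d z n = ∑ f ∈ monicsOfDegree F n, bdzf d z f :=
  finsum_mem_eq_finite_toFinset_sum _ _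

/-- Every monic `f` of degree `< N` factors over the monic irreducibles of degree `< N` with
multiplicities at most `N`, so its term occurs in the expansion of this truncated Euler product. -/
theorem sum_range_norm_Bdz_mul_pow_le_prod (d : F[X]) (z : ℂ) {x : ℝ} (hx : 0 ≤ x) (N : ℕ) :
    ∑ a ∈ range N, ‖Bdz F d z a‖ * x ^ a ≤
      ∏ p ∈ (range N).biUnion (monicsOfDegree F) with Irreducible p,
        ∑ k ∈ range (N + 1), ‖bdcoef d z p k‖ * (x ^ p.natDegree) ^ k := by
  set U := (range N).biUnion (monicsOfDegree F)
  have hU : ∀ f, f ∈ U ↔ f.Monic ∧ f.natDegree < N := fun f => by simp [U, and_comm]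
  have hsupp : ∀ f ∈ U, (normalizedFactors f).toFinset ⊆ U.filter Irreducible := by
    intro f hf p hp
    obtain ⟨hfm, hfN⟩ := (hU f).mp hf
    obtain ⟨hirr, hpm, hpf⟩ :=
      (Polynomial.mem_normalizedFactors_iff hfm.ne_zero).mp (Multiset.mem_toFinset.mp hp)
    exact mem_filter.mpr ⟨(hU p).mpr ⟨hpm, (natDegree_le_of_dvd hpf hfm.ne_zero).trans_lt hfN⟩,
      hirr⟩
  have hinj : Set.InjOn (fun f (p : U.filter Irreducible) => (normalizedFactors f).count p.1)
      U := by
    intro f hf g hg hfg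
    have hcount : normalizedFactors f = normalizedFactors g := Multiset.ext.mpr fun p => by
      by_cases hp : p ∈ U.filter Irreducible
      · exact congrFun hfg ⟨p, hp⟩
      · rw [Multiset.count_eq_zero.mpr fun h => hp (hsupp f hf (Multiset.mem_toFinset.mpr h)),
          Multiset.count_eq_zero.mpr fun h => hp (hsupp g hg (Multiset.mem_toFinset.mpr h))]
    rw [← prod_normalizedFactors_of_monic ((hU f).mp hf).1,
      ← prod_normalizedFactors_of_monic ((hU g).mp hg).1, hcount]
  have hdisj : (range N : Set ℕ).PairwiseDisjoint (monicsOfDegree F) :=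
    fun a _ b _ hab => disjoint_left.mpr fun f ha hb =>
      hab ((mem_monicsOfDegree.mp ha).2.symm.trans (mem_monicsOfDegree.mp hb).2)
  calc ∑ a ∈ range N, ‖Bdz F d z a‖ * x ^ a
      ≤ ∑ a ∈ range N, ∑ f ∈ monicsOfDegree F a, ‖bdzf d z f‖ * x ^ f.natDegree := by
        refine sum_le_sum fun a _ => ?_
        rw [sum_congr rfl fun f hf => by rw [(mem_monicsOfDegree.mp hf).2], ← sum_mul,
          Bdz_eq_sum_monicsOfDegree]
        gcongr
        exact norm_sum_le _ _
    _ = ∑ f ∈ U, ‖bdzf d z f‖ * x ^ f.natDegree := (sum_biUnion hdisj).symm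
    _ = ∑ f ∈ U, ∏ p ∈ U.filter Irreducible, ‖bdcoef d z p ((normalizedFactors f).count p)‖ *
          (x ^ p.natDegree) ^ (normalizedFactors f).count p :=
        sum_congr rfl fun f hf => norm_bdzf_mul_pow_eq_prod d z x ((hU f).mp hf).1 (hsupp f hf)
    _ ≤ _ := sum_prod_le_prod_sum_range U _ (fun f p => (normalizedFactors f).count p)
        (fun p k => ‖bdcoef d z p k‖ * (x ^ p.natDegree) ^ k)
        (fun p k => by positivity)
        (fun f hf p _ => (count_normalizedFactors_le_natDegree ((hU f).mp hf).1 p).trans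
          ((hU f).mp hf).2.le) hinj

theorem prod_filter_not_dvd_sum_norm_bdcoef_le {A s r x : ℝ} {z : ℂ} {d : F[X]}
    (hA : 1 ≤ A) (hz : ‖z‖ ≤ A) (hs0 : 0 < s) (hs1 : s < 1) (hx0 : 0 ≤ x) (hxs : x ≤ s)
    (hqx : Fintype.card F * x ^ 2 ≤ r) (hr : r < 1) (P : Finset F[X])
    (hP : ∀ p ∈ P, p.Monic ∧ Irreducible p) (M : ℕ) :
    ∏ p ∈ P with ¬ p ∣ d, ∑ k ∈ range M, ‖bdcoef d z p k‖ * (x ^ p.natDegree) ^ k ≤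
      Real.exp ((A + 1) * (1 - s) ^ (-A) / s ^ 2 / (1 - r)) := by
  set E := (A + 1) * (1 - s) ^ (-A) / s ^ 2
  have hE : 0 ≤ E := div_nonneg (mul_nonneg (by linarith) (by positivity)) (by positivity)
  calc ∏ p ∈ P with ¬ p ∣ d, ∑ k ∈ range M, ‖bdcoef d z p k‖ * (x ^ p.natDegree) ^ k
      ≤ ∏ p ∈ P with ¬ p ∣ d, Real.exp (E * (x ^ 2) ^ p.natDegree) := by
        refine prod_le_prod (fun p _ => by positivity) fun p hp => ?_
        obtain ⟨hpP, hpd⟩ := mem_filter.mp hp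
        have hxp : x ^ p.natDegree ≤ s :=
          (pow_le_of_le_one hx0 (hxs.trans hs1.le) (hP p hpP).2.natDegree_pos.ne').trans hxs
        rw [bdcoef_of_not_dvd hpd, ← pow_mul, mul_comm 2, pow_mul]
        exact sum_range_norm_bcoef_mul_pow_le hA hz hs0 hs1 (by positivity) hxp M
    _ = Real.exp (E * ∑ p ∈ P with ¬ p ∣ d, (x ^ 2) ^ p.natDegree) := by
        rw [← Real.exp_sum, mul_sum]
    _ ≤ Real.exp (E / (1 - r)) := by
        rw [div_eq_mul_inv]
        gcongr
        exact sum_pow_natDegree_le (fun p hp => (hP p (mem_filter.mp hp).1).1) (by positivity)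
          hqx hr

theorem sum_range_norm_Bdz_mul_pow_le {A s r x : ℝ} {z : ℂ} {d : F[X]} (hd : d ≠ 0)
    (hA : 1 ≤ A) (hz : ‖z‖ ≤ A) (hs0 : 0 < s) (hs1 : s < 1) (hx0 : 0 ≤ x)
    (hxs : x ≤ s) (hqx : Fintype.card F * x ^ 2 ≤ r) (hr : r < 1) (N : ℕ) :
    ∑ a ∈ range N, ‖Bdz F d z a‖ * x ^ a ≤
      Real.exp ((A + 1) * (1 - s) ^ (-A) / s ^ 2 / (1 - r)) *
        ∏ p ∈ (normalizedFactors d).toFinset, (1 - x ^ p.natDegree) ^ (-A) := by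
  set P := {p ∈ (range N).biUnion (monicsOfDegree F) | Irreducible p}
  have hP : ∀ p ∈ P, p.Monic ∧ Irreducible p := fun p hp => by
    simp only [P, mem_filter, mem_biUnion, mem_monicsOfDegree] at hp
    obtain ⟨⟨_, _, hpm, _⟩, hirr⟩ := hp
    exact ⟨hpm, hirr⟩
  set w := fun p : F[X] => ∑ k ∈ range (N + 1), ‖bdcoef d z p k‖ * (x ^ p.natDegree) ^ k
  calc ∑ a ∈ range N, ‖Bdz F d z a‖ * x ^ a ≤ ∏ p ∈ P, w p :=
        sum_range_norm_Bdz_mul_pow_le_prod d z hx0 N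
    _ = (∏ p ∈ P with p ∣ d, w p) * ∏ p ∈ P with ¬ p ∣ d, w p :=
        (prod_filter_mul_prod_filter_not P _ _).symm
    _ ≤ (∏ p ∈ (normalizedFactors d).toFinset, (1 - x ^ p.natDegree) ^ (-A)) *
          Real.exp ((A + 1) * (1 - s) ^ (-A) / s ^ 2 / (1 - r)) :=
        mul_le_mul (prod_filter_dvd_sum_norm_bdcoef_le hd hz hx0 (hxs.trans_lt hs1) P hP _)
          (prod_filter_not_dvd_sum_norm_bdcoef_le hA hz hs0 hs1 hx0 hxs hqx hr P hP _)
          (by positivity) (prod_nonneg fun p _ =>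
            Real.rpow_nonneg (sub_nonneg.mpr (pow_le_one₀ hx0 (hxs.trans hs1.le))) _)
    _ = _ := mul_comm _ _

end Bdz

/-- Lemma 3.6: bound for `Σ_a |B^d_z(a)|·q^{-σa}`. -/
theorem Bdz_bound :
    ∀ A : ℝ, 1 < A → ∃ C : ℝ,
      ∀ (F : Type) [Field F] [Fintype F], ∀ d : Polynomial F, d.Monic → 1 ≤ d.natDegree →
        ∀ (σ : ℝ) (z : ℂ), 2 / 3 ≤ σ → ‖z‖ ≤ A →
          Summable (fun a : ℕ =>
            ‖Bdz F d z a‖ * (Fintype.card F : ℝ) ^ (-(σ * (a : ℝ)))) ∧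
          ∑' a : ℕ, ‖Bdz F d z a‖ * (Fintype.card F : ℝ) ^ (-(σ * (a : ℝ))) ≤
            C * ∏ p ∈ (normalizedFactors d).toFinset,
              (1 - (Fintype.card F : ℝ) ^ (-(σ * (p.natDegree : ℝ)))) ^ (-A) := by
  intro A hA
  set s : ℝ := 2 ^ (-(2 / 3 : ℝ))
  set r : ℝ := 2 ^ (-(1 / 3 : ℝ))
  have hs1 : s < 1 := Real.rpow_lt_one_of_one_lt_of_neg one_lt_two (by norm_num)
  have hr : r < 1 := Real.rpow_lt_one_of_one_lt_of_neg one_lt_two (by norm_num)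
  refine ⟨Real.exp ((A + 1) * (1 - s) ^ (-A) / s ^ 2 / (1 - r)), ?_⟩
  intro F _ _ d hd _ σ z hσ hz
  have hq : (2 : ℝ) ≤ Fintype.card F := by exact_mod_cast Fintype.one_lt_card (α := F)
  set q : ℝ := (Fintype.card F : ℝ)
  set x := q ^ (-σ)
  have hxn : ∀ n : ℕ, q ^ (-(σ * n)) = x ^ n := fun n => by
    rw [← Real.rpow_natCast, ← Real.rpow_mul (by linarith), neg_mul]
  have hxs : x ≤ s := calc
    x ≤ q ^ (-(2 / 3 : ℝ)) := Real.rpow_le_rpow_of_exponent_le (by linarith) (by linarith)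
    _ ≤ s := Real.rpow_le_rpow_of_nonpos two_pos hq (by norm_num)
  have hqx : q * x ^ 2 ≤ r := calc
    q * x ^ 2 = q ^ (1 - 2 * σ) := by
      rw [← hxn, Real.rpow_sub (by linarith), Real.rpow_one, Real.rpow_neg (by linarith)]
      push_cast; ring_nf
    _ ≤ q ^ (-(1 / 3 : ℝ)) := Real.rpow_le_rpow_of_exponent_le (by linarith) (by linarith)
    _ ≤ r := Real.rpow_le_rpow_of_nonpos two_pos hq (by norm_num)
  have hpartial := sum_range_norm_Bdz_mul_pow_le hd.ne_zero hA.le hz (by positivity) hs1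
    (by positivity) hxs hqx hr
  simp only [hxn]
  have hnonneg : ∀ a : ℕ, 0 ≤ ‖Bdz F d z a‖ * x ^ a := fun a => by positivity
  exact ⟨summable_of_sum_range_le hnonneg hpartial, Real.tsum_le_of_sum_range_le hnonneg hpartial⟩
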